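/- (Monotonicity and summability along RLS without resetting.) Let R be a symmetric positive-definite real q×q matrix, Γ₀ a symmetric positive-definite real p×p matrix, (φ_t)_{t≥1} a sequence in ℝ^{p×q}, and p̃₀ ∈ ℝᵖ. Define recursively Γ_{t+1} = (Γ_t⁻¹ + φ_{t+1}R⁻¹φ_{t+1}ᵀ)⁻¹, W_{t+1} = (R + φ_{t+1}ᵀΓ_tφ_{t+1})⁻¹, and p̃_{t+1} = p̃_t − Γ_t φ_{t+1} W_{t+1} φ_{t+1}ᵀ p̃_t. Then every Γ_t is symmetric positive definite, the sequence V_t = p̃_tᵀ Γ_t⁻¹ p̃_t is nonincreasing and nonnegative (hence convergent), and for every T ≥ 0, Σ_{t=0}^{T} (φ_{t+1}ᵀ p̃_t)ᵀ W_{t+1} (φ_{t+1}ᵀ p̃_t) ≤ V₀; in particular this series is summable. -/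

import Mathlib

/-!
The information matrices `Γₜ⁻¹` grow by the positive semidefinite terms `φ R⁻¹ φᵀ`, so every
`Γₜ` stays positive definite. The heart of the argument is an exact one-step identity for the
Lyapunov function: `V_{t+1} = V_t - sᵀ W_{t+1} s` with `s = φ_{t+1}ᵀ p̃_t`. As `W_{t+1}` is positive
definite, `V` is nonincreasing and nonnegative; telescoping bounds the partial sums of the
decrements by `V_0`, which gives summability.
-/

open Matrix Filter

namespace Matrix

variable {α m n : Type*} [Fintype m] [Fintype n]

theorem mulVec_dotProduct_eq_dotProduct_transpose_mulVec [CommSemiring α]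
    (A : Matrix m n α) (x : n → α) (y : m → α) : (A *ᵥ x) ⬝ᵥ y = x ⬝ᵥ (Aᵀ *ᵥ y) := by
  rw [dotProduct_transpose_mulVec, dotProduct_comm]

theorem PosDef.add_transpose_mul_mul {G : Matrix n n ℝ} {R : Matrix m m ℝ}
    (hR : R.PosDef) (hG : G.PosSemidef) (Φ : Matrix n m ℝ) : (R + Φᵀ * G * Φ).PosDef :=
  hR.add_posSemidef (hG.conjTranspose_mul_mul_same Φ)

variable [DecidableEq m] [DecidableEq n]

theorem PosDef.inv_add_mul_mul_transpose {G : Matrix n n ℝ} {R : Matrix m m ℝ}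
    (hG : G.PosDef) (hR : R.PosDef) (Φ : Matrix n m ℝ) : (G⁻¹ + Φ * R⁻¹ * Φᵀ).PosDef := by
  have hΦRΦ := hR.inv.posSemidef.mul_mul_conjTranspose_same Φ
  rw [conjTranspose_eq_transpose_of_trivial] at hΦRΦ
  exact hG.inv.add_posSemidef hΦRΦ

/-- With `M = R + Φᵀ G Φ` and `u = M⁻¹ Φᵀ v`, the updated vector `w = v - G Φ u` satisfies
`Φᵀ w = R u`, so both parts of the new quadratic form become quadratic expressions in `u`. -/
theorem dotProduct_mulVec_information_update [CommRing α]
    {G : Matrix n n α} {R : Matrix m m α} (Φ : Matrix n m α) (v : n → α)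
    (hG_symm : G.IsSymm) (hG : IsUnit G.det) (hR : IsUnit R.det)
    (hM : IsUnit (R + Φᵀ * G * Φ).det) :
    (v - (G * Φ * (R + Φᵀ * G * Φ)⁻¹) *ᵥ (Φᵀ *ᵥ v)) ⬝ᵥ
      ((G⁻¹ + Φ * R⁻¹ * Φᵀ) *ᵥ (v - (G * Φ * (R + Φᵀ * G * Φ)⁻¹) *ᵥ (Φᵀ *ᵥ v))) =
      v ⬝ᵥ (G⁻¹ *ᵥ v) - (Φᵀ *ᵥ v) ⬝ᵥ ((R + Φᵀ * G * Φ)⁻¹ *ᵥ (Φᵀ *ᵥ v)) := by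
  set M := R + Φᵀ * G * Φ
  set s := Φᵀ *ᵥ v
  set u := M⁻¹ *ᵥ s
  have hgain : (G * Φ * M⁻¹) *ᵥ s = G *ᵥ (Φ *ᵥ u) := by
    simp only [u, mulVec_mulVec, Matrix.mul_assoc]
  have hΦGΦ : Φᵀ *ᵥ (G *ᵥ (Φ *ᵥ u)) = s - R *ᵥ u := by
    rw [mulVec_mulVec, mulVec_mulVec, show Φᵀ * G * Φ = M - R by simp [M],
      sub_mulVec, mulVec_mulVec, mul_nonsing_inv M hM, one_mulVec]
  have hinnov : Φᵀ *ᵥ (v - G *ᵥ (Φ *ᵥ u)) = R *ᵥ u := by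
    rw [mulVec_sub, hΦGΦ, sub_sub_cancel]
  have hprior : (v - G *ᵥ (Φ *ᵥ u)) ⬝ᵥ (G⁻¹ *ᵥ (v - G *ᵥ (Φ *ᵥ u))) =
      v ⬝ᵥ (G⁻¹ *ᵥ v) - u ⬝ᵥ s - u ⬝ᵥ (R *ᵥ u) := by
    have hGG : G⁻¹ *ᵥ (G *ᵥ (Φ *ᵥ u)) = Φ *ᵥ u := by
      rw [mulVec_mulVec, nonsing_inv_mul G hG, one_mulVec]
    have hGGv : G *ᵥ (G⁻¹ *ᵥ v) = v := by
      rw [mulVec_mulVec, mul_nonsing_inv G hG, one_mulVec]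
    have hcross : v ⬝ᵥ (Φ *ᵥ u) = u ⬝ᵥ s := by
      rw [dotProduct_comm, mulVec_dotProduct_eq_dotProduct_transpose_mulVec]
    have hcross' : (G *ᵥ (Φ *ᵥ u)) ⬝ᵥ (G⁻¹ *ᵥ v) = u ⬝ᵥ s := by
      rw [mulVec_dotProduct_eq_dotProduct_transpose_mulVec, hG_symm.eq, hGGv, dotProduct_comm,
        hcross]
    have hquad : (G *ᵥ (Φ *ᵥ u)) ⬝ᵥ (Φ *ᵥ u) = u ⬝ᵥ s - u ⬝ᵥ (R *ᵥ u) := by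
      rw [dotProduct_comm, mulVec_dotProduct_eq_dotProduct_transpose_mulVec, hΦGΦ,
        dotProduct_sub]
    rw [mulVec_sub, hGG, dotProduct_sub, sub_dotProduct, sub_dotProduct, hcross, hcross', hquad]
    ring
  have hdata : (v - G *ᵥ (Φ *ᵥ u)) ⬝ᵥ ((Φ * R⁻¹ * Φᵀ) *ᵥ (v - G *ᵥ (Φ *ᵥ u))) =
      u ⬝ᵥ (R *ᵥ u) := by
    rw [← mulVec_mulVec, ← mulVec_mulVec, hinnov, dotProduct_comm,
      mulVec_dotProduct_eq_dotProduct_transpose_mulVec, hinnov, mulVec_mulVec,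
      nonsing_inv_mul R hR, one_mulVec, dotProduct_comm]
  rw [hgain, add_mulVec, dotProduct_add, hprior, hdata, dotProduct_comm s, sub_add_cancel]

end Matrix

/-- **monotonicity and summability along RLS without resetting.**
With `Γ_{t+1} = (Γ_t⁻¹ + φ_{t+1}R⁻¹φ_{t+1}ᵀ)⁻¹`, `W_{t+1} = (R + φ_{t+1}ᵀΓ_tφ_{t+1})⁻¹`,
and `p̃_{t+1} = p̃_t − Γ_tφ_{t+1}W_{t+1}φ_{t+1}ᵀp̃_t`: every `Γ_t` is symmetric positive
definite, `V_t = p̃_tᵀΓ_t⁻¹p̃_t` is nonincreasing and nonnegative (hence convergent), and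
`Σ_{t=0}^T (φ_{t+1}ᵀp̃_t)ᵀ W_{t+1} (φ_{t+1}ᵀp̃_t) ≤ V₀` for every `T`; in particular this
series is summable. -/
theorem stmt15 {p q : ℕ} (R : Matrix (Fin q) (Fin q) ℝ) (hR : R.PosDef)
    (Γ : ℕ → Matrix (Fin p) (Fin p) ℝ) (hΓ0 : (Γ 0).PosDef)
    (φ : ℕ → Matrix (Fin p) (Fin q) ℝ)
    (W : ℕ → Matrix (Fin q) (Fin q) ℝ)
    (hΓ : ∀ t : ℕ, Γ (t + 1) = ((Γ t)⁻¹ + φ (t + 1) * R⁻¹ * (φ (t + 1))ᵀ)⁻¹)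
    (hW : ∀ t : ℕ, W (t + 1) = (R + (φ (t + 1))ᵀ * Γ t * φ (t + 1))⁻¹)
    (ptil : ℕ → Fin p → ℝ)
    (hptil : ∀ t : ℕ, ptil (t + 1) =
      ptil t - (Γ t * φ (t + 1) * W (t + 1)) *ᵥ ((φ (t + 1))ᵀ *ᵥ ptil t)) :
    (∀ t : ℕ, (Γ t).PosDef) ∧
    (∀ t : ℕ, ptil (t + 1) ⬝ᵥ ((Γ (t + 1))⁻¹ *ᵥ ptil (t + 1)) ≤
      ptil t ⬝ᵥ ((Γ t)⁻¹ *ᵥ ptil t)) ∧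
    (∀ t : ℕ, 0 ≤ ptil t ⬝ᵥ ((Γ t)⁻¹ *ᵥ ptil t)) ∧
    (∃ L : ℝ, Tendsto (fun t : ℕ => ptil t ⬝ᵥ ((Γ t)⁻¹ *ᵥ ptil t)) atTop (nhds L)) ∧
    (∀ T : ℕ, ∑ t ∈ Finset.range (T + 1),
        ((φ (t + 1))ᵀ *ᵥ ptil t) ⬝ᵥ (W (t + 1) *ᵥ ((φ (t + 1))ᵀ *ᵥ ptil t)) ≤
      ptil 0 ⬝ᵥ ((Γ 0)⁻¹ *ᵥ ptil 0)) ∧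
    Summable (fun t : ℕ =>
      ((φ (t + 1))ᵀ *ᵥ ptil t) ⬝ᵥ (W (t + 1) *ᵥ ((φ (t + 1))ᵀ *ᵥ ptil t))) := by
  have hΓpd (t : ℕ) : (Γ t).PosDef := by
    induction t with
    | zero => exact hΓ0
    | succ t ih => rw [hΓ t]; exact (ih.inv_add_mul_mul_transpose hR _).inv
  set V : ℕ → ℝ := fun t => ptil t ⬝ᵥ ((Γ t)⁻¹ *ᵥ ptil t)
  set f : ℕ → ℝ := fun t =>
    ((φ (t + 1))ᵀ *ᵥ ptil t) ⬝ᵥ (W (t + 1) *ᵥ ((φ (t + 1))ᵀ *ᵥ ptil t))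
  have hstep (t : ℕ) : V t - V (t + 1) = f t := by
    have hM := hR.add_transpose_mul_mul (hΓpd t).posSemidef (φ (t + 1))
    have hinfo := (hΓpd t).inv_add_mul_mul_transpose hR (φ (t + 1))
    have hsymm : (Γ t).IsSymm := by
      rw [IsSymm, ← conjTranspose_eq_transpose_of_trivial]
      exact (hΓpd t).isHermitian
    have hquad := dotProduct_mulVec_information_update (φ (t + 1)) (ptil t) hsymm
      (hΓpd t).det_pos.ne'.isUnit hR.det_pos.ne'.isUnit hM.det_pos.ne'.isUnit
    simp only [V, f]
    rw [hΓ t, nonsing_inv_nonsing_inv _ hinfo.det_pos.ne'.isUnit, hptil t, hW t, hquad]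
    ring
  have hf_nonneg (t : ℕ) : 0 ≤ f t := by
    have hWpd : (W (t + 1)).PosDef := by
      rw [hW t]; exact (hR.add_transpose_mul_mul (hΓpd t).posSemidef _).inv
    exact hWpd.posSemidef.dotProduct_mulVec_nonneg _
  have hV_nonneg (t : ℕ) : 0 ≤ V t := (hΓpd t).inv.posSemidef.dotProduct_mulVec_nonneg _
  have hV_anti : Antitone V := antitone_nat_of_succ_le fun t => by linarith [hstep t, hf_nonneg t]
  have hpartial (T : ℕ) : ∑ t ∈ Finset.range T, f t ≤ V 0 := by
    simp only [← hstep, Finset.sum_range_sub']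
    linarith [hV_nonneg T]
  exact ⟨hΓpd, fun t => hV_anti t.le_succ, hV_nonneg,
    ⟨_, tendsto_atTop_ciInf hV_anti ⟨0, Set.forall_mem_range.2 hV_nonneg⟩⟩,
    fun T => hpartial (T + 1), summable_of_sum_range_le hf_nonneg hpartial⟩
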